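/- arXiv:1702.00980 — 7 statements merged into one kernel-verified Lean document; each statement's English description precedes it below -/
import Mathlib

section
/- Tropical Sylvester–Franke identity over the max-plus semiring: for every n×n matrix A over ℝ_max and every k with 1 ≤ k ≤ n, the tropical permanent of the k-th compound matrix satisfies per(A^{∧k}) = per(A)^{⊙ C(n−1,k−1)}, i.e. per(A^{∧k}) equals the binomial coefficient C(n−1,k−1) times per(A) in the usual arithmetic of ℝ ∪ {−∞} (with c·(−∞) = −∞ for c ≥ 1). -/
open Matrix

noncomputable section

/-- The max-plus semiring `ℝ_max = ℝ ∪ {−∞}`: addition is `max` (the lattice `⊔`),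
multiplication is `+` with `⊥ = −∞` absorbing. -/
abbrev Rmax : Type := WithBot ℝ

/-- Tropical matrix product: `(A ⊙ B) i j = max_t (A i t + B t j)`. -/
def tropMul {l m p : Type*} [Fintype m] (A : Matrix l m Rmax) (B : Matrix m p Rmax) :
    Matrix l p Rmax :=
  Matrix.of fun i j => Finset.univ.sup fun t => A i t + B t j

/-- The tropical identity matrix: `0` on the diagonal, `−∞` elsewhere. -/
def tropId (m : Type*) [DecidableEq m] : Matrix m m Rmax :=
  Matrix.of fun i j => if i = j then (0 : Rmax) else ⊥

/-- Tropical permanent: maximum over permutations of the sum of the selected entries. -/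
def tropPer {m : Type*} [Fintype m] [DecidableEq m] (A : Matrix m m Rmax) : Rmax :=
  Finset.univ.sup fun σ : Equiv.Perm m => ∑ i, A i (σ i)

/-- Tropical trace: maximum of the diagonal entries. -/
def tropTrace {m : Type*} [Fintype m] (A : Matrix m m Rmax) : Rmax :=
  Finset.univ.sup fun i => A i i

/-- The type of `k`-element subsets of `{1,…,n}`. -/
abbrev KSub (n k : ℕ) : Type := {I : Finset (Fin n) // I.card = k}

/-- The `k`-th compound matrix: indexed by `k`-element subsets; the `(I,J)` entry is the
maximum over bijections `σ : I → J` of `∑_{i ∈ I} A i (σ i)`. -/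
def compound {n : ℕ} (k : ℕ) (A : Matrix (Fin n) (Fin n) Rmax) :
    Matrix (KSub n k) (KSub n k) Rmax :=
  Matrix.of fun I J =>
    Finset.univ.sup fun σ : {x // x ∈ I.1} ≃ {x // x ∈ J.1} =>
      ∑ i : {x // x ∈ I.1}, A i.1 (σ i).1

/-- Tropical adjoint: `adj(A) i j = per(A_{(j,i)})`, deleting row `j` and column `i`. -/
def tropAdj {n : ℕ} (A : Matrix (Fin (n+1)) (Fin (n+1)) Rmax) :
    Matrix (Fin (n+1)) (Fin (n+1)) Rmax :=
  Matrix.of fun i j => tropPer (A.submatrix j.succAbove i.succAbove)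

/-- Quasi-inverse `A^∇` of a nonsingular matrix: `(A^∇) i j = adj(A) i j − per(A)`. -/
def tropQInv {n : ℕ} (A : Matrix (Fin (n+1)) (Fin (n+1)) Rmax) :
    Matrix (Fin (n+1)) (Fin (n+1)) Rmax :=
  Matrix.of fun i j => tropAdj A i j + ((- (WithBot.unbotD 0 (tropPer A)) : ℝ) : Rmax)

/-- A matrix over `ℝ_max` is invertible iff it is a monomial (generalized permutation) matrix. -/
def IsMonomial {n : ℕ} (A : Matrix (Fin n) (Fin n) Rmax) : Prop :=
  ∃ (π : Equiv.Perm (Fin n)) (d : Fin n → ℝ),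
    ∀ i j, A i j = if j = π i then ((d i : ℝ) : Rmax) else ⊥

/-- `m`-fold tropical power of a square matrix (`A^{⊙0}` is the tropical identity). -/
def tropPow {m : Type*} [Fintype m] [DecidableEq m] (A : Matrix m m Rmax) : ℕ → Matrix m m Rmax
  | 0 => tropId m
  | k + 1 => tropMul (tropPow A k) A

/-!
Lower bound: an optimal permutation `τ` of `A` maps `k`-subsets to `k`-subsets, and summing the
restricted sums `∑_{i ∈ I} A i (τ i)` over all `I` counts every term `A i (τ i)` exactly
`C(n-1,k-1)` times, once for each `I ∋ i`.

Upper bound: a permutation `P` of the `k`-subsets together with optimal bijections `I → P I`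
selects a multiset of entries of `A` containing `C(n-1,k-1)` entries of every row and of every
column. By Hall's theorem its multiplicity matrix contains a permutation in its support; removing
it and inducting splits the multiset into `C(n-1,k-1)` permutations, each of weight at most
`per A`.
-/

open Finset

theorem permMatrix_apply_le {m : Type*} [DecidableEq m] {M : Matrix m m ℕ} {σ : Equiv.Perm m}
    (hσ : ∀ i, M i (σ i) ≠ 0) (i j : m) : σ.permMatrix ℕ i j ≤ M i j := by
  simp only [Equiv.Perm.permMatrix, PEquiv.toMatrix_apply, Equiv.toPEquiv_apply, Option.mem_def,
    Option.some.injEq]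
  split_ifs with h
  · exact Nat.one_le_iff_ne_zero.2 (h ▸ hσ i)
  · exact Nat.zero_le _

section Semimagic

variable {m : Type*} [Fintype m]

def IsSemimagic (M : Matrix m m ℕ) (N : ℕ) : Prop :=
  (∀ i, ∑ j, M i j = N) ∧ ∀ j, ∑ i, M i j = N

theorem IsSemimagic.exists_perm_forall_ne_zero [DecidableEq m] {M : Matrix m m ℕ} {N : ℕ}
    (hM : IsSemimagic M N) (hN : 0 < N) : ∃ σ : Equiv.Perm m, ∀ i, M i (σ i) ≠ 0 := by
  let support (i : m) : Finset m := {j | M i j ≠ 0}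
  have hall (S : Finset m) : #S ≤ #(S.biUnion support) := by
    have hrows : ∑ i ∈ S, ∑ j ∈ S.biUnion support, M i j = #S * N := by
      refine sum_const_nat fun i hi => (hM.1 i).symm ▸ sum_subset (subset_univ _) ?_
      intro j _ hj
      by_contra h
      exact hj (mem_biUnion.2 ⟨i, hi, mem_filter.2 ⟨mem_univ j, h⟩⟩)
    have hcols : ∑ i, ∑ j ∈ S.biUnion support, M i j = #(S.biUnion support) * N :=
      sum_comm.trans (sum_const_nat fun j _ => hM.2 j)
    refine Nat.le_of_mul_le_mul_right ?_ hN
    rw [← hrows, ← hcols]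
    exact sum_le_sum_of_subset (subset_univ S)
  obtain ⟨f, hf, hfs⟩ := (all_card_le_biUnion_card_iff_exists_injective support).1 hall
  exact ⟨Equiv.ofBijective f (Finite.injective_iff_bijective.1 hf),
    fun i => (mem_filter.1 (hfs i)).2⟩

variable [DecidableEq m]

theorem IsSemimagic.sub_permMatrix {M : Matrix m m ℕ} {N : ℕ} (hM : IsSemimagic M (N + 1))
    {σ : Equiv.Perm m} (hσ : ∀ i, M i (σ i) ≠ 0) :
    IsSemimagic (M - σ.permMatrix ℕ) N := by
  have hle := permMatrix_apply_le hσ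
  constructor
  · intro i
    rw [← Nat.add_sub_cancel N 1, ← hM.1 i]
    simp only [Matrix.sub_apply]
    rw [sum_tsub_distrib _ fun j _ => hle i j]
    simp [Equiv.toPEquiv_apply]
  · intro j
    rw [← Nat.add_sub_cancel N 1, ← hM.2 j]
    simp only [Matrix.sub_apply]
    rw [sum_tsub_distrib _ fun i _ => hle i j]
    simp [Equiv.toPEquiv_apply, ← Equiv.eq_symm_apply]

end Semimagic

section TropicalPermanent

variable {m : Type*} [Fintype m] [DecidableEq m]

theorem sum_le_tropPer (A : Matrix m m Rmax) (σ : Equiv.Perm m) :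
    ∑ i, A i (σ i) ≤ tropPer A :=
  le_sup (f := fun σ : Equiv.Perm m => ∑ i, A i (σ i)) (mem_univ σ)

theorem exists_tropPer_eq_sum (A : Matrix m m Rmax) :
    ∃ σ : Equiv.Perm m, tropPer A = ∑ i, A i (σ i) :=
  let ⟨σ, _, hσ⟩ :=
    exists_mem_eq_sup univ univ_nonempty fun σ : Equiv.Perm m => ∑ i, A i (σ i)
  ⟨σ, hσ⟩

theorem sum_sum_permMatrix_nsmul {R : Type*} [AddCommMonoid R] (A : Matrix m m R)
    (σ : Equiv.Perm m) : ∑ i, ∑ j, σ.permMatrix ℕ i j • A i j = ∑ i, A i (σ i) := by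
  simp [Equiv.toPEquiv_apply]

/-- Tropical analogue of the Birkhoff–von Neumann theorem: a semimagic matrix with line sums `N`
is a sum of `N` permutation matrices, each contributing at most `per A`. -/
theorem IsSemimagic.sum_nsmul_le_nsmul_tropPer (A : Matrix m m Rmax) {M : Matrix m m ℕ} {N : ℕ}
    (hM : IsSemimagic M N) : ∑ i, ∑ j, M i j • A i j ≤ N • tropPer A := by
  induction N generalizing M with
  | zero =>
    have hM0 : ∀ i j, M i j = 0 := fun i j => (sum_eq_zero_iff.1 (hM.1 i)) j (mem_univ j)
    simp [hM0]
  | succ N ih =>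
    obtain ⟨σ, hσ⟩ := hM.exists_perm_forall_ne_zero N.succ_pos
    have hsplit : M = (M - σ.permMatrix ℕ) + σ.permMatrix ℕ := by
      ext i j
      exact (tsub_add_cancel_of_le (permMatrix_apply_le hσ i j)).symm
    calc ∑ i, ∑ j, M i j • A i j
        = ∑ i, ∑ j, (M - σ.permMatrix ℕ) i j • A i j + ∑ i, A i (σ i) := by
          rw [← sum_sum_permMatrix_nsmul A σ, ← sum_add_distrib]
          conv_lhs => rw [hsplit]
          simp only [Matrix.add_apply, add_nsmul, sum_add_distrib]
      _ ≤ N • tropPer A + tropPer A :=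
          add_le_add (ih (hM.sub_permMatrix hσ)) (sum_le_tropPer A σ)
      _ = (N + 1) • tropPer A := (succ_nsmul _ _).symm

end TropicalPermanent

section Multigraph

variable {ι m : Type*} [Fintype m] [DecidableEq m]

theorem sum_apply_eq_sum_card_nsmul {R : Type*} [AddCommMonoid R] (A : Matrix m m R)
    (s : Finset ι) (r c : ι → m) :
    ∑ x ∈ s, A (r x) (c x) = ∑ i, ∑ j, #{x ∈ s | r x = i ∧ c x = j} • A i j := by
  rw [← sum_fiberwise s r]
  refine sum_congr rfl fun i _ => ?_
  rw [← sum_fiberwise _ c]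
  refine sum_congr rfl fun j _ => ?_
  rw [filter_filter, ← sum_const]
  exact sum_congr rfl fun x hx => by rw [(mem_filter.1 hx).2.1, (mem_filter.1 hx).2.2]

theorem isSemimagic_card_filter {s : Finset ι} {r c : ι → m} {N : ℕ}
    (hr : ∀ i, #{x ∈ s | r x = i} = N) (hc : ∀ j, #{x ∈ s | c x = j} = N) :
    IsSemimagic (Matrix.of fun i j => #{x ∈ s | r x = i ∧ c x = j}) N := by
  refine ⟨fun i => ?_, fun j => ?_⟩
  · simp only [Matrix.of_apply, ← filter_filter]
    rw [sum_card_fiberwise_eq_card_filter, filter_true_of_mem fun _ _ => mem_univ _, hr]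
  · simp only [Matrix.of_apply, and_comm (a := r _ = _), ← filter_filter]
    rw [sum_card_fiberwise_eq_card_filter, filter_true_of_mem fun _ _ => mem_univ _, hc]

theorem sum_le_nsmul_tropPer (A : Matrix m m Rmax) {s : Finset ι} {r c : ι → m} {N : ℕ}
    (hr : ∀ i, #{x ∈ s | r x = i} = N) (hc : ∀ j, #{x ∈ s | c x = j} = N) :
    ∑ x ∈ s, A (r x) (c x) ≤ N • tropPer A := by
  rw [sum_apply_eq_sum_card_nsmul]
  exact (isSemimagic_card_filter hr hc).sum_nsmul_le_nsmul_tropPer A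

end Multigraph

theorem card_filter_mem_eq_choose {α : Type*} [Fintype α] [DecidableEq α] (a : α) {k : ℕ}
    (hk : 1 ≤ k) :
    #{I : {s : Finset α // #s = k} | a ∈ I.1} = (Fintype.card α - 1).choose (k - 1) := by
  have h := card_filter_powersetCard_subset {a} univ k (subset_univ _) (by simpa using hk)
  rw [card_singleton, card_univ] at h
  rw [← h]
  refine card_bij (fun I _ => I.1) (fun I hI => ?_) (fun I _ J _ h => Subtype.ext h) ?_
  · simpa [mem_powersetCard_univ, I.2] using (mem_filter.1 hI).2
  · intro s hs
    simp only [mem_filter, mem_powersetCard_univ, singleton_subset_iff] at hs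
    exact ⟨⟨s, hs.1⟩, by simpa using hs.2, rfl⟩

section Compound

variable {n k : ℕ}

def KSub.mapPerm (τ : Equiv.Perm (Fin n)) : Equiv.Perm (KSub n k) :=
  τ.finsetCongr.subtypeEquiv fun s => by simp [Equiv.finsetCongr_apply]

theorem exists_compound_eq_sum (A : Matrix (Fin n) (Fin n) Rmax) (I J : KSub n k) :
    ∃ e : I.1 ≃ J.1, compound k A I J = ∑ x : I.1, A x (e x) := by
  have : Nonempty (I.1 ≃ J.1) := Fintype.card_eq.1 (by simp [I.2, J.2])
  obtain ⟨e, _, he⟩ :=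
    exists_mem_eq_sup univ univ_nonempty fun e : I.1 ≃ J.1 => ∑ x : I.1, A x (e x)
  exact ⟨e, he⟩

theorem sum_le_compound_mapPerm (A : Matrix (Fin n) (Fin n) Rmax) (τ : Equiv.Perm (Fin n))
    (I : KSub n k) : ∑ i ∈ I.1, A i (τ i) ≤ compound k A I (KSub.mapPerm τ I) := by
  let e : I.1 ≃ (KSub.mapPerm τ I).1 :=
    τ.subtypeEquiv fun i => by simp [KSub.mapPerm, Equiv.finsetCongr_apply]
  rw [← sum_coe_sort]
  exact le_sup (f := fun e : I.1 ≃ (KSub.mapPerm τ I).1 => ∑ x : I.1, A x (e x)) (mem_univ e)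

theorem card_filter_sigma_equiv_apply_eq_choose (hk : 1 ≤ k) (P : Equiv.Perm (KSub n k))
    (e : ∀ I, I.1 ≃ (P I).1) (j : Fin n) :
    #{p : Σ I : KSub n k, I.1 | (e p.1 p.2).1 = j} = (n - 1).choose (k - 1) := by
  have hfiber (I : KSub n k) : #{x | (e I x).1 = j} = if j ∈ (P I).1 then 1 else 0 := by
    rw [card_filter, Equiv.sum_comp (e I) fun y => if y.1 = j then 1 else 0,
      sum_coe_sort (P I).1 fun y => if y = j then 1 else 0, sum_ite_eq']
  rw [← univ_sigma_univ, card_filter, sum_sigma]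
  simp only [← card_filter, hfiber]
  rw [card_filter, Equiv.sum_comp P fun J => if j ∈ J.1 then 1 else 0, ← card_filter,
    card_filter_mem_eq_choose j hk, Fintype.card_fin]

theorem nsmul_tropPer_le_tropPer_compound (hk : 1 ≤ k) (A : Matrix (Fin n) (Fin n) Rmax) :
    (n - 1).choose (k - 1) • tropPer A ≤ tropPer (compound k A) := by
  obtain ⟨τ, hτ⟩ := exists_tropPer_eq_sum A
  calc (n - 1).choose (k - 1) • tropPer A
      = ∑ i, #{I : KSub n k | i ∈ I.1} • A i (τ i) := by
        simp only [hτ, smul_sum, card_filter_mem_eq_choose _ hk, Fintype.card_fin]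
    _ = ∑ I : KSub n k, ∑ i ∈ I.1, A i (τ i) := by
        simp only [← sum_const]
        exact sum_comm' fun I i => by simp
    _ ≤ ∑ I, compound k A I (KSub.mapPerm τ I) :=
        sum_le_sum fun I _ => sum_le_compound_mapPerm A τ I
    _ ≤ tropPer (compound k A) := sum_le_tropPer _ _

theorem sum_compound_le_nsmul_tropPer (hk : 1 ≤ k) (A : Matrix (Fin n) (Fin n) Rmax)
    (P : Equiv.Perm (KSub n k)) :
    ∑ I, compound k A I (P I) ≤ (n - 1).choose (k - 1) • tropPer A := by
  choose e he using fun I => exists_compound_eq_sum A I (P I)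
  calc ∑ I, compound k A I (P I) = ∑ p : Σ I : KSub n k, I.1, A p.2 (e p.1 p.2) := by
        rw [← univ_sigma_univ, sum_sigma]
        exact sum_congr rfl fun I _ => he I
    _ ≤ (n - 1).choose (k - 1) • tropPer A :=
        sum_le_nsmul_tropPer A
          (card_filter_sigma_equiv_apply_eq_choose hk 1 fun I => Equiv.refl _)
          (card_filter_sigma_equiv_apply_eq_choose hk P e)

end Compound

theorem tropical_sylvester_franke_general {n k : ℕ} (hk1 : 1 ≤ k)
    (A : Matrix (Fin n) (Fin n) Rmax) :
    tropPer (compound k A) = (Nat.choose (n - 1) (k - 1)) • tropPer A :=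
  le_antisymm (Finset.sup_le fun P _ => sum_compound_le_nsmul_tropPer hk1 A P)
    (nsmul_tropPer_le_tropPer_compound hk1 A)

/-- Tropical Sylvester–Franke identity over `ℝ_max`:
`per(A^{∧k}) = C(n−1,k−1) ⊙ per(A)`. -/
theorem tropical_sylvester_franke {n k : ℕ} (hk1 : 1 ≤ k) (hk2 : k ≤ n)
    (A : Matrix (Fin n) (Fin n) Rmax) :
    tropPer (compound k A) = (Nat.choose (n - 1) (k - 1)) • tropPer A :=
  tropical_sylvester_franke_general hk1 A
end
end

section
/- Over the max-plus semiring, if A is an invertible (monomial) n×n matrix over ℝ_max, then for every n×n matrix B one has adj(A⊙B) = adj(B) ⊙ adj(A), and moreover the quasi-inverse of A equals its tropical inverse: A^∇ = A^{−1}. -/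
open Matrix

noncomputable section

/-!
Left multiplication by a monomial matrix `A` (permutation `π`, weights `d`) moves row `π i` of
`B` to row `i` and adds `d i` to it. The tropical permanent is invariant under permuting rows and
shifts by `c k` when row `k` is shifted by `c k`; since deleting row `j` of `A ⊙ B` amounts to
deleting row `π j` of `B` and permuting the rest,
`adj(A ⊙ B) i j = (∑_{k ≠ j} d k) + adj(B) i (π j)`.
For `B = I` this computes `adj A`: a monomial matrix with entry `∑_{k ≠ j} d k` at `(π j, j)`,
so multiplying by it on the right gives the same formula. Likewise `per A = ∑ d`, hence `A^∇` has
entry `-d j` at `(π j, j)`, which is exactly what `A ⊙ A⁻¹ = I` forces on `A⁻¹`.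
-/

lemma Finset.sup_univ_ite_eq_bot {α β : Type*} [Fintype α] [DecidableEq α] [SemilatticeSup β]
    [OrderBot β] (f : α → β) (a : α) :
    Finset.univ.sup (fun t => if t = a then f t else ⊥) = f a := by
  rw [Finset.sup_ite, Finset.filter_eq', if_pos (Finset.mem_univ a)]
  simp

lemma Equiv.Perm.exists_succAbove_comm {n : ℕ} (π : Equiv.Perm (Fin (n + 1))) (j : Fin (n + 1)) :
    ∃ ρ : Equiv.Perm (Fin n), ∀ k, π (j.succAbove k) = (π j).succAbove (ρ k) := by
  let e : {x // x ≠ j} ≃ {x // x ≠ π j} := π.subtypeEquiv fun _ => π.injective.ne_iff.symm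
  refine ⟨(finSuccAboveEquiv j).trans (e.trans (finSuccAboveEquiv (π j)).symm), fun k => ?_⟩
  have h := congrArg Subtype.val
    ((finSuccAboveEquiv (π j)).apply_symm_apply (e (finSuccAboveEquiv j k)))
  rw [finSuccAboveEquiv_apply] at h
  exact h.symm

section Permanent

variable {m : Type*} [Fintype m] [DecidableEq m]

lemma tropPer_submatrix_equiv_id (M : Matrix m m Rmax) (e : m ≃ m) :
    tropPer (M.submatrix e id) = tropPer M := by
  have h : ∀ σ : Equiv.Perm m, ∑ k, M.submatrix e id k (σ k) = ∑ k, M k ((σ * e⁻¹) k) :=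
    fun σ => Fintype.sum_equiv e _ _ fun k => by simp
  unfold tropPer
  simp only [h]
  conv_rhs => rw [← Finset.map_univ_equiv (Equiv.mulRight e⁻¹), Finset.sup_map]
  rfl

lemma tropPer_of_add_rows (c : m → Rmax) (M : Matrix m m Rmax) :
    tropPer (of fun k l => c k + M k l) = (∑ k, c k) + tropPer M := by
  unfold tropPer
  rw [Finset.apply_sup_eq_sup_comp_of_linearOrder (fun x => (∑ k, c k) + x)
    (fun _ _ h => add_le_add_right h _) (WithBot.add_bot _)]
  simp [Function.comp_def, Finset.sum_add_distrib]

lemma tropPer_of_add_rows_perm (c : m → Rmax) (ρ : Equiv.Perm m) (M : Matrix m m Rmax) :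
    tropPer (of fun k l => c k + M (ρ k) l) = (∑ k, c k) + tropPer M := by
  rw [← tropPer_submatrix_equiv_id M ρ]
  exact tropPer_of_add_rows c _

lemma tropPer_eq_bot_of_row_eq_bot (M : Matrix m m Rmax) (k : m) (h : ∀ l, M k l = ⊥) :
    tropPer M = ⊥ :=
  (Finset.sup_eq_bot_iff _ _).2 fun _ _ => WithBot.sum_eq_bot_iff.2 ⟨k, Finset.mem_univ _, h _⟩

lemma tropPer_tropId : tropPer (tropId m) = 0 := by
  refine le_antisymm (Finset.sup_le fun _ _ => Finset.sum_nonpos fun k _ => ?_)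
    (le_trans ?_ (Finset.le_sup (Finset.mem_univ 1)))
  · simp only [tropId, of_apply]; split_ifs <;> simp
  · simp [tropId]

end Permanent

lemma tropAdj_tropId {n : ℕ} : tropAdj (tropId (Fin (n + 1))) = tropId (Fin (n + 1)) := by
  ext i j
  by_cases hij : i = j
  · subst hij
    have : (tropId (Fin (n + 1))).submatrix i.succAbove i.succAbove = tropId (Fin n) := by
      ext k l; simp [tropId]
    simp only [tropAdj, of_apply, this, tropPer_tropId]
    simp [tropId]
  · obtain ⟨k, hk⟩ := Fin.exists_succAbove_eq hij
    simp only [tropAdj, of_apply, tropId, if_neg hij]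
    exact tropPer_eq_bot_of_row_eq_bot _ k fun l => by simp [← hk]

lemma tropAdj_of_add_rows_perm {n : ℕ} (c : Fin (n + 1) → Rmax) (π : Equiv.Perm (Fin (n + 1)))
    (M : Matrix (Fin (n + 1)) (Fin (n + 1)) Rmax) (i j : Fin (n + 1)) :
    tropAdj (of fun k l => c k + M (π k) l) i j
      = (∑ k, c (j.succAbove k)) + tropAdj M i (π j) := by
  obtain ⟨ρ, hρ⟩ := π.exists_succAbove_comm j
  have : (of fun k l => c k + M (π k) l).submatrix j.succAbove i.succAbove
      = of fun k l => c (j.succAbove k) + M.submatrix (π j).succAbove i.succAbove (ρ k) l := by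
    ext k l; simp [hρ]
  simp only [tropAdj, of_apply, this, tropPer_of_add_rows_perm]

section Monomial

variable {n : ℕ} {A : Matrix (Fin (n + 1)) (Fin (n + 1)) Rmax} {π : Equiv.Perm (Fin (n + 1))}
  {d : Fin (n + 1) → ℝ}

lemma tropMul_apply_of_monomial (hA : ∀ i j, A i j = if j = π i then (d i : Rmax) else ⊥)
    (B : Matrix (Fin (n + 1)) (Fin (n + 1)) Rmax) (i j : Fin (n + 1)) :
    tropMul A B i j = d i + B (π i) j := by
  have h : ∀ t, A i t + B t j = if t = π i then d i + B t j else ⊥ := fun t => by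
    rw [hA]; split_ifs <;> simp
  simp only [tropMul, of_apply, h, Finset.sup_univ_ite_eq_bot]

lemma eq_add_tropId_of_monomial (hA : ∀ i j, A i j = if j = π i then (d i : Rmax) else ⊥) :
    A = of fun k l => (d k : Rmax) + tropId (Fin (n + 1)) (π k) l := by
  ext k l
  simp only [hA, tropId, of_apply, eq_comm (a := l)]
  split_ifs <;> simp

lemma tropAdj_tropMul_of_monomial (hA : ∀ i j, A i j = if j = π i then (d i : Rmax) else ⊥)
    (B : Matrix (Fin (n + 1)) (Fin (n + 1)) Rmax) (i j : Fin (n + 1)) :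
    tropAdj (tropMul A B) i j = ((∑ k, d (j.succAbove k) : ℝ) : Rmax) + tropAdj B i (π j) := by
  have h : tropMul A B = of fun k l => (d k : Rmax) + B (π k) l := by
    ext k l; exact tropMul_apply_of_monomial hA B k l
  rw [h, tropAdj_of_add_rows_perm, WithBot.coe_sum]

lemma tropAdj_of_monomial (hA : ∀ i j, A i j = if j = π i then (d i : Rmax) else ⊥)
    (i j : Fin (n + 1)) :
    tropAdj A i j = if i = π j then ((∑ k, d (j.succAbove k) : ℝ) : Rmax) else ⊥ := by
  rw [eq_add_tropId_of_monomial hA, tropAdj_of_add_rows_perm, tropAdj_tropId, WithBot.coe_sum]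
  by_cases h : i = π j <;> simp [tropId, h]

lemma tropPer_of_monomial (hA : ∀ i j, A i j = if j = π i then (d i : Rmax) else ⊥) :
    tropPer A = ((∑ i, d i : ℝ) : Rmax) := by
  rw [eq_add_tropId_of_monomial hA, tropPer_of_add_rows_perm, tropPer_tropId, add_zero,
    WithBot.coe_sum]

lemma tropQInv_of_monomial (hA : ∀ i j, A i j = if j = π i then (d i : Rmax) else ⊥)
    (i j : Fin (n + 1)) :
    tropQInv A i j = if i = π j then ((-d j : ℝ) : Rmax) else ⊥ := by
  simp only [tropQInv, of_apply, tropAdj_of_monomial hA, tropPer_of_monomial hA,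
    WithBot.unbotD_coe]
  split_ifs
  · rw [← WithBot.coe_add, Fin.sum_univ_succAbove d j]
    congr 1
    ring
  · exact WithBot.bot_add _

lemma eq_of_tropMul_eq_tropId_of_monomial
    (hA : ∀ i j, A i j = if j = π i then (d i : Rmax) else ⊥)
    {X : Matrix (Fin (n + 1)) (Fin (n + 1)) Rmax} (hX : tropMul A X = tropId (Fin (n + 1)))
    (i j : Fin (n + 1)) :
    X i j = if i = π j then ((-d j : ℝ) : Rmax) else ⊥ := by
  have h := congrFun (congrFun hX (π.symm i)) j
  rw [tropMul_apply_of_monomial hA, Equiv.apply_symm_apply] at h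
  have hXij : X i j = ((-d (π.symm i) : ℝ) : Rmax) + tropId (Fin (n + 1)) (π.symm i) j := by
    rw [← h, ← add_assoc, ← WithBot.coe_add, neg_add_cancel, WithBot.coe_zero, zero_add]
  rw [hXij]
  simp only [tropId, of_apply, Equiv.symm_apply_eq]
  split_ifs with hij <;> simp [hij]

end Monomial

theorem tropAdj_mul_of_monomial_general {n : ℕ} (A B Ainv : Matrix (Fin (n+1)) (Fin (n+1)) Rmax)
    (hA : IsMonomial A)
    (h1 : tropMul A Ainv = tropId (Fin (n+1))) :
    tropAdj (tropMul A B) = tropMul (tropAdj B) (tropAdj A) ∧ tropQInv A = Ainv := by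
  obtain ⟨π, d, hA⟩ := hA
  refine ⟨?_, ?_⟩
  · ext i j
    have h : ∀ t, tropAdj B i t + tropAdj A t j
        = if t = π j then tropAdj B i t + ((∑ k, d (j.succAbove k) : ℝ) : Rmax) else ⊥ := by
      intro t
      rw [tropAdj_of_monomial hA]
      split_ifs <;> simp
    rw [tropAdj_tropMul_of_monomial hA, add_comm]
    simp only [tropMul, of_apply, h, Finset.sup_univ_ite_eq_bot]
  · ext i j
    rw [tropQInv_of_monomial hA, eq_of_tropMul_eq_tropId_of_monomial hA h1]

/-- for invertible (monomial) `A`, `adj(A⊙B) = adj(B) ⊙ adj(A)` for every `B`,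
and the quasi-inverse of `A` equals its tropical inverse. -/
theorem tropAdj_mul_of_monomial {n : ℕ} (A B Ainv : Matrix (Fin (n+1)) (Fin (n+1)) Rmax)
    (hA : IsMonomial A)
    (h1 : tropMul A Ainv = tropId (Fin (n+1)))
    (h2 : tropMul Ainv A = tropId (Fin (n+1))) :
    tropAdj (tropMul A B) = tropMul (tropAdj B) (tropAdj A) ∧ tropQInv A = Ainv :=
  tropAdj_mul_of_monomial_general A B Ainv hA h1

end
end

section
/- Over the max-plus semiring, if A is an invertible (monomial) n×n matrix over ℝ_max, then for every n×n matrix B and every k with 1 ≤ k ≤ n, the Cauchy–Binet equality (A⊙B)^{∧k} = A^{∧k} ⊙ B^{∧k} holds, and (A^{−1})^{∧k} = (A^{∧k})^{−1}, i.e. the k-th compound of A is invertible with inverse the k-th compound of A^{−1}. The analogous equality (B⊙A)^{∧k} = B^{∧k} ⊙ A^{∧k} also holds. -/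
open Matrix

noncomputable section

/-!
A monomial matrix `A` with permutation `π` and finite entries `d` only permutes and shifts
rows: `(A ⊙ B) i j = d i + B (π i) j`. A bijection `I → J` for `A ⊙ B` is therefore the same
as a bijection `π I → J` for `B`, so `(A ⊙ B)^{∧k}` is `B^{∧k}` with rows permuted by the
induced permutation of `k`-subsets and shifted by `∑_{i ∈ I} d i`; taking `B` to be the
identity shows that `A^{∧k}` is itself monomial with exactly this permutation and these shifts.
Products on the other side follow by transposition, and the inverse statement from
the product formula applied to `A ⊙ A⁻¹ = I` and `A⁻¹ ⊙ A = I`, since `I^{∧k} = I`.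
-/

open Finset

theorem Finset.sup_univ_eq_of_forall_ne_eq_bot {α β : Type*} [Fintype α] [SemilatticeSup β]
    [OrderBot β] (f : α → β) {a : α} (h : ∀ b ≠ a, f b = ⊥) : univ.sup f = f a := by
  refine le_antisymm (Finset.sup_le fun b _ => ?_) (le_sup (mem_univ a))
  by_cases hb : b = a
  · rw [hb]
  · rw [h b hb]
    exact bot_le

theorem Finset.sup_univ_comp_equiv {α β γ : Type*} [Fintype α] [Fintype β] [SemilatticeSup γ]
    [OrderBot γ] (e : α ≃ β) (f : β → γ) : univ.sup (f ∘ e) = univ.sup f := by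
  rw [← univ_map_equiv_to_embedding e, sup_map]
  rfl

theorem Rmax.add_sup {ι : Type*} (c : Rmax) (s : Finset ι) (f : ι → Rmax) :
    c + s.sup f = s.sup (c + f ·) :=
  apply_sup_eq_sup_comp_of_linearOrder (c + ·) (fun _ _ h => add_le_add_right h c)
    (WithBot.add_bot c)

section TropMul

variable {l m p : Type*}

theorem tropMul_tropId [Fintype m] [DecidableEq m] (A : Matrix l m Rmax) :
    tropMul A (tropId m) = A := by
  ext i j
  rw [tropMul, of_apply, sup_univ_eq_of_forall_ne_eq_bot _ (a := j)]
  · simp [tropId]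
  · intro t ht
    simp [tropId, ht]

theorem tropMul_transpose [Fintype m] (A : Matrix l m Rmax) (B : Matrix m p Rmax) :
    (tropMul A B)ᵀ = tropMul Bᵀ Aᵀ := by
  ext i j
  simp [tropMul, add_comm]

def IsMonomialWith [DecidableEq m] (A : Matrix m m Rmax) (π : Equiv.Perm m) (d : m → ℝ) :
    Prop :=
  ∀ i j, A i j = if j = π i then (d i : Rmax) else ⊥

variable [DecidableEq m] {A : Matrix m m Rmax} {π : Equiv.Perm m} {d : m → ℝ}

theorem IsMonomialWith.tropMul_apply [Fintype m] (hA : IsMonomialWith A π d)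
    (B : Matrix m p Rmax) (i : m) (j : p) : tropMul A B i j = d i + B (π i) j := by
  rw [tropMul, of_apply, sup_univ_eq_of_forall_ne_eq_bot _ (a := π i), hA, if_pos rfl]
  intro t ht
  rw [hA, if_neg ht, WithBot.bot_add]

theorem IsMonomialWith.transpose (hA : IsMonomialWith A π d) :
    IsMonomialWith Aᵀ π.symm (d ∘ π.symm) := by
  intro i j
  rw [transpose_apply, hA]
  by_cases h : i = π j
  · rw [if_pos h, if_pos (π.eq_symm_apply.2 h.symm), Function.comp_apply, h,
      Equiv.symm_apply_apply]
  · rw [if_neg h, if_neg fun h' => h (π.eq_symm_apply.1 h').symm]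

end TropMul

section Compound

variable {n k : ℕ}

def KSub.perm (π : Equiv.Perm (Fin n)) : Equiv.Perm (KSub n k) :=
  π.finsetCongr.subtypeEquiv fun s => by simp

@[simp]
theorem KSub.mem_perm {π : Equiv.Perm (Fin n)} {I : KSub n k} {x : Fin n} :
    x ∈ (KSub.perm π I).1 ↔ π.symm x ∈ I.1 := by
  simp [KSub.perm]

theorem compound_tropId : compound k (tropId (Fin n)) = tropId (KSub n k) := by
  ext I J
  simp only [compound, tropId, of_apply]
  split_ifs with hIJ
  · subst hIJ
    refine le_antisymm (Finset.sup_le fun σ _ => sum_nonpos fun i _ => ?_) ?_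
    · split_ifs <;> simp
    · exact le_sup_of_le (mem_univ (Equiv.refl _)) (by simp)
  · refine (Finset.sup_eq_bot_iff _ _).2 fun σ _ => WithBot.sum_eq_bot_iff.2 ?_
    by_contra! hσ
    have hfix : ∀ i : {x // x ∈ I.1}, (i : Fin n) = σ i := fun i => by
      by_contra h
      exact hσ i (mem_univ i) (if_neg h)
    have hsub : I.1 ⊆ J.1 := fun x hx =>
      (congrArg (· ∈ J.1) (hfix ⟨x, hx⟩)).mpr (σ ⟨x, hx⟩).2
    exact hIJ (Subtype.ext (eq_of_subset_of_card_le hsub (by rw [I.2, J.2])))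

theorem compound_transpose (A : Matrix (Fin n) (Fin n) Rmax) :
    compound k Aᵀ = (compound k A)ᵀ := by
  ext I J
  simp only [compound, transpose_apply, of_apply]
  rw [← sup_univ_comp_equiv (Equiv.symmEquiv _ _)]
  refine sup_congr rfl fun σ _ => Fintype.sum_equiv σ.symm _ _ fun i => ?_
  simp

variable {A : Matrix (Fin n) (Fin n) Rmax} {π : Equiv.Perm (Fin n)} {d : Fin n → ℝ}

theorem IsMonomialWith.compound_tropMul_apply (hA : IsMonomialWith A π d)
    (B : Matrix (Fin n) (Fin n) Rmax) (I J : KSub n k) :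
    compound k (tropMul A B) I J =
      ((∑ i ∈ I.1, d i : ℝ) : Rmax) + compound k B (KSub.perm π I) J := by
  let e : {x // x ∈ I.1} ≃ {x // x ∈ (KSub.perm π I).1} := π.subtypeEquiv fun x => by simp
  simp only [compound, of_apply, hA.tropMul_apply, sum_add_distrib, Rmax.add_sup]
  rw [← sup_univ_comp_equiv (e.equivCongr (Equiv.refl _))]
  refine sup_congr rfl fun σ _ => ?_
  rw [WithBot.coe_sum, ← sum_coe_sort I.1]
  congr 1
  exact Fintype.sum_equiv e _ _ fun i => by simp [e]

theorem IsMonomialWith.isMonomialWith_compound (hA : IsMonomialWith A π d) :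
    IsMonomialWith (compound k A) (KSub.perm π) fun I => ∑ i ∈ I.1, d i := by
  intro I J
  have h := hA.compound_tropMul_apply (tropId _) I J
  rw [tropMul_tropId, compound_tropId] at h
  rw [h, tropId, of_apply]
  by_cases hJ : J = KSub.perm π I
  · rw [if_pos hJ.symm, if_pos hJ, add_zero]
  · rw [if_neg (Ne.symm hJ), if_neg hJ, WithBot.add_bot]

theorem IsMonomialWith.compound_tropMul (hA : IsMonomialWith A π d)
    (B : Matrix (Fin n) (Fin n) Rmax) :
    compound k (tropMul A B) = tropMul (compound k A) (compound k B) := by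
  ext I J
  rw [hA.compound_tropMul_apply, hA.isMonomialWith_compound.tropMul_apply]

theorem IsMonomialWith.compound_tropMul_right (hA : IsMonomialWith A π d)
    (B : Matrix (Fin n) (Fin n) Rmax) :
    compound k (tropMul B A) = tropMul (compound k B) (compound k A) := by
  calc compound k (tropMul B A) = (compound k (tropMul Aᵀ Bᵀ))ᵀ := by
        rw [← compound_transpose, tropMul_transpose, transpose_transpose, transpose_transpose]
    _ = (tropMul (compound k Aᵀ) (compound k Bᵀ))ᵀ := by
        rw [hA.transpose.compound_tropMul]
    _ = tropMul (compound k B) (compound k A) := by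
        rw [tropMul_transpose, compound_transpose, compound_transpose, transpose_transpose,
          transpose_transpose]

end Compound

theorem compound_mul_of_monomial_general {n k : ℕ}
    (A B Ainv : Matrix (Fin n) (Fin n) Rmax)
    (hA : IsMonomial A)
    (h1 : tropMul A Ainv = tropId (Fin n))
    (h2 : tropMul Ainv A = tropId (Fin n)) :
    compound k (tropMul A B) = tropMul (compound k A) (compound k B) ∧
    compound k (tropMul B A) = tropMul (compound k B) (compound k A) ∧
    tropMul (compound k A) (compound k Ainv) = tropId (KSub n k) ∧
    tropMul (compound k Ainv) (compound k A) = tropId (KSub n k) := by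
  obtain ⟨π, d, hA⟩ := hA
  have hA : IsMonomialWith A π d := hA
  refine ⟨hA.compound_tropMul B, hA.compound_tropMul_right B, ?_, ?_⟩
  · rw [← hA.compound_tropMul, h1, compound_tropId]
  · rw [← hA.compound_tropMul_right, h2, compound_tropId]

/-- for invertible (monomial) `A`, Cauchy–Binet becomes an equality
`(A⊙B)^{∧k} = A^{∧k} ⊙ B^{∧k}` (and similarly `(B⊙A)^{∧k} = B^{∧k} ⊙ A^{∧k}`),
and `(A^{−1})^{∧k} = (A^{∧k})^{−1}`. -/
theorem compound_mul_of_monomial {n k : ℕ} (hk1 : 1 ≤ k) (hk2 : k ≤ n)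
    (A B Ainv : Matrix (Fin n) (Fin n) Rmax)
    (hA : IsMonomial A)
    (h1 : tropMul A Ainv = tropId (Fin n))
    (h2 : tropMul Ainv A = tropId (Fin n)) :
    compound k (tropMul A B) = tropMul (compound k A) (compound k B) ∧
    compound k (tropMul B A) = tropMul (compound k B) (compound k A) ∧
    tropMul (compound k A) (compound k Ainv) = tropId (KSub n k) ∧
    tropMul (compound k Ainv) (compound k A) = tropId (KSub n k) :=
  compound_mul_of_monomial_general A B Ainv hA h1 h2
end
end

section
/- Tropical Jacobi inequality over the max-plus semiring: if A is a nonsingular n×n matrix over ℝ_max (per(A) > −∞), then for every k with 1 ≤ k ≤ n−1 and all k-element subsets I, J of {1,…,n}, one has per(A) + (A^∇)^{∧(n−k)}_{J^c, I^c} ≥ A^{∧k}_{I,J}, where I^c, J^c denote complements in {1,…,n}. -/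
open Matrix

noncomputable section

/-!
Fix a maximizing permutation `π` and a bijection `σ : I → J`, viewed as a partial matching `f`
of the rows `I` onto the columns `J`. A column `c` not hit by `f` starts an alternating path
`c → π⁻¹ c → f (π⁻¹ c) → …` that stops at a row `r ∉ I`. Exchanging the `f`- and `π`-edges along
the path splits `f + π` into a matching of all rows but `r` with all columns but `c`, bounded by
`per A_(r,c) = adj(A)_{c,r}`, and a matching `f'` of `I ∪ {r}` onto `J ∪ {c}`. Induction on
`#Iᶜ` then gives `∑ σ + #Iᶜ · per A ≤ per A + ∑_{j ∉ J} adj(A)_{j,τ j}` for a bijection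
`τ : Jᶜ → Iᶜ`, which is the inequality after subtracting `per A` from each adjoint entry.
-/

namespace Equiv

variable {α : Type*} [DecidableEq α]

theorem image_extendSubtype [Fintype α] {I J : Finset α} (σ : {x // x ∈ I} ≃ {x // x ∈ J}) :
    I.image σ.extendSubtype = J :=
  Finset.eq_of_subset_of_card_le
    (fun _ hy => by
      obtain ⟨x, hx, rfl⟩ := Finset.mem_image.mp hy
      exact σ.extendSubtype_mem x hx)
    (by rw [Finset.card_image_of_injective _ σ.extendSubtype.injective, ← Fintype.card_coe I,
      ← Fintype.card_coe J, Fintype.card_congr σ])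

theorem Perm.exists_image_insert_eq (τ : Equiv.Perm α) {s t : Finset α} (h : s.image τ = t)
    {c r : α} (hc : c ∉ s) (hr : r ∉ t) :
    ∃ τ' : Equiv.Perm α, τ' c = r ∧ (∀ j ∈ s, τ' j = τ j) ∧
      (insert c s).image τ' = insert r t := by
  have hfix : ∀ j ∈ s, (τ.trans (swap (τ c) r)) j = τ j := fun j hj =>
    swap_apply_of_ne_of_ne (fun h' => hc (τ.injective h' ▸ hj))
      fun h' => hr (h ▸ h' ▸ Finset.mem_image_of_mem τ hj)
  refine ⟨τ.trans (swap (τ c) r), swap_apply_left _ _, hfix, ?_⟩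
  rw [Finset.image_insert, trans_apply, swap_apply_left, ← h, Finset.image_congr hfix]

end Equiv

namespace TropicalJacobi

open Finset

variable {α : Type*} [DecidableEq α]

/-- `T` is the row set of an alternating path in the bipartite graph of rows and columns: it starts
at the column `c`, alternates `π`-edges and `f`-edges, and ends at the row `r`, which `f` leaves
unmatched. -/
structure IsAlternatingPath (π : Equiv.Perm α) (f : α → α) (I : Finset α) (c r : α)
    (T : Finset α) : Prop where
  not_mem : r ∉ I
  mem : r ∈ T
  erase_subset : T.erase r ⊆ I
  image_eq : T.image π = insert c ((T.erase r).image f)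

theorem exists_alternatingPath (π : Equiv.Perm α) (f : α → α) (I : Finset α) (c : α)
    (hf : Set.InjOn f I) (hc : c ∉ I.image f) :
    ∃ r T, IsAlternatingPath π f I c r T := by
  induction I using strongInduction generalizing c with
  | H I ih =>
  by_cases hx : π.symm c ∉ I
  · exact ⟨π.symm c, {π.symm c}, hx, by simp, by simp, by simp⟩
  rw [not_not] at hx
  set x := π.symm c
  -- a path from the column `f x` for `I.erase x`, preceded by `c → x`
  have hfx : f x ∉ (I.erase x).image f := by
    simp only [mem_image, mem_erase, not_exists, not_and, and_imp]
    exact fun y hyx hy hxy => hyx (hf hy hx hxy)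
  obtain ⟨r, T, ⟨hr, hrT, hTsub, hTimg⟩⟩ :=
    ih _ (erase_ssubset hx) (f x) (hf.mono (by simp)) hfx
  have hxT : x ∉ T := by
    intro hxT
    have : c ∈ T.image π := by simpa [x] using mem_image_of_mem π hxT
    rw [hTimg, mem_insert] at this
    rcases this with h | h
    · exact hc (h ▸ mem_image_of_mem f hx)
    · exact hc (image_subset_image (hTsub.trans (erase_subset _ _)) h)
  have hrx : r ≠ x := by rintro rfl; exact hxT hrT
  refine ⟨r, insert x T, fun hrI => hr (mem_erase.mpr ⟨hrx, hrI⟩),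
    mem_insert_of_mem hrT, ?_, ?_⟩
  · rw [erase_insert_of_ne hrx.symm]
    exact insert_subset hx (hTsub.trans (erase_subset _ _))
  · rw [erase_insert_of_ne hrx.symm, image_insert, image_insert, hTimg]
    simp [x]

namespace IsAlternatingPath

variable {π : Equiv.Perm α} {f : α → α} {I T : Finset α} {c r : α}

theorem apply_mem_insert_image_iff (hP : IsAlternatingPath π f I c r T) (y : α) :
    π y ∈ insert c ((T.erase r).image f) ↔ y ∈ T := by
  rw [← hP.image_eq, π.injective.mem_finset_image]

theorem mem_of_mem_of_ne (hP : IsAlternatingPath π f I c r T) {x : α} (hx : x ∈ T)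
    (hxr : x ≠ r) : x ∈ I :=
  hP.erase_subset (mem_erase.mpr ⟨hxr, hx⟩)

theorem mapsTo_piecewise (hP : IsAlternatingPath π f I c r T) (hc : c ∉ I.image f) :
    Set.MapsTo (T.piecewise f π) {r}ᶜ {c}ᶜ := by
  intro x hxr
  simp only [Set.mem_compl_iff, Set.mem_singleton_iff] at hxr ⊢
  by_cases hxT : x ∈ T
  · rw [piecewise_eq_of_mem _ _ _ hxT]
    rintro rfl
    exact hc (mem_image_of_mem f (hP.mem_of_mem_of_ne hxT hxr))
  · rw [piecewise_eq_of_notMem _ _ _ hxT]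
    intro hπx
    exact hxT ((hP.apply_mem_insert_image_iff x).mp (hπx ▸ mem_insert_self _ _))

theorem injOn_piecewise (hP : IsAlternatingPath π f I c r T) (hf : Set.InjOn f I) :
    Set.InjOn (T.piecewise f π) {r}ᶜ := by
  have hmix : ∀ x ∈ T, x ≠ r → ∀ y, f x = π y → y ∈ T := fun x hx hxr y h =>
    (hP.apply_mem_insert_image_iff y).mp <|
      h ▸ mem_insert_of_mem (mem_image_of_mem f (mem_erase.mpr ⟨hxr, hx⟩))
  intro x hxr y hyr hxy
  simp only [Set.mem_compl_iff, Set.mem_singleton_iff] at hxr hyr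
  by_cases hxT : x ∈ T <;> by_cases hyT : y ∈ T <;>
    simp only [piecewise_eq_of_mem, piecewise_eq_of_notMem, hxT, hyT,
      not_false_eq_true] at hxy
  · exact hf (hP.mem_of_mem_of_ne hxT hxr) (hP.mem_of_mem_of_ne hyT hyr) hxy
  · exact absurd (hmix x hxT hxr y hxy) hyT
  · exact absurd (hmix y hyT hyr x hxy.symm) hxT
  · exact π.injective hxy

theorem mem_of_mem_insert_of_notMem (hP : IsAlternatingPath π f I c r T) {x : α}
    (hx : x ∈ insert r I) (hxT : x ∉ T) : x ∈ I :=
  (mem_insert.mp hx).resolve_left fun h => hxT (h ▸ hP.mem)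

theorem injOn_piecewise_insert (hP : IsAlternatingPath π f I c r T) (hf : Set.InjOn f I)
    (hc : c ∉ I.image f) : Set.InjOn (T.piecewise π f) ↑(insert r I) := by
  have hmix : ∀ x ∈ T, ∀ y ∈ I, π x = f y → y ∈ T := by
    intro x hx y hy h
    have := (hP.apply_mem_insert_image_iff x).mpr hx
    rw [h, mem_insert] at this
    obtain ⟨z, hz, hzy⟩ := mem_image.mp <|
      this.resolve_left fun h' => hc (h' ▸ mem_image_of_mem f hy)
    exact hf (hP.erase_subset hz) hy hzy ▸ mem_of_mem_erase hz
  intro x hx y hy hxy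
  rw [mem_coe] at hx hy
  by_cases hxT : x ∈ T <;> by_cases hyT : y ∈ T <;>
    simp only [piecewise_eq_of_mem, piecewise_eq_of_notMem, hxT, hyT,
      not_false_eq_true] at hxy
  · exact π.injective hxy
  · exact absurd (hmix x hxT y (hP.mem_of_mem_insert_of_notMem hy hyT) hxy) hyT
  · exact absurd (hmix y hyT x (hP.mem_of_mem_insert_of_notMem hx hxT)
      hxy.symm) hxT
  · exact hf (hP.mem_of_mem_insert_of_notMem hx hxT)
      (hP.mem_of_mem_insert_of_notMem hy hyT) hxy

theorem image_piecewise_insert (hP : IsAlternatingPath π f I c r T) (hf : Set.InjOn f I)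
    (hc : c ∉ I.image f) : (insert r I).image (T.piecewise π f) = insert c (I.image f) := by
  refine eq_of_subset_of_card_le (fun y hy => ?_) ?_
  · obtain ⟨x, hx, rfl⟩ := mem_image.mp hy
    by_cases hxT : x ∈ T
    · rw [piecewise_eq_of_mem _ _ _ hxT]
      exact insert_subset_insert c (image_subset_image
        (hP.erase_subset)) ((hP.apply_mem_insert_image_iff x).mpr hxT)
    · rw [piecewise_eq_of_notMem _ _ _ hxT]
      exact mem_insert_of_mem (mem_image_of_mem f (hP.mem_of_mem_insert_of_notMem hx hxT))
  · rw [card_image_of_injOn (hP.injOn_piecewise_insert hf hc),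
      card_insert_of_notMem hc, card_insert_of_notMem hP.not_mem,
      card_image_of_injOn hf]

end IsAlternatingPath

section Exchange

variable {M : Type*} [AddCommMonoid M] (A : α → α → M) (f g : α → α)

theorem sum_apply_piecewise (s T : Finset α) :
    ∑ i ∈ s, A i (T.piecewise f g i) = ∑ i ∈ s ∩ T, A i (f i) + ∑ i ∈ s \ T, A i (g i) := by
  rw [← sum_inter_add_sum_sdiff s T]
  congr 1 <;> refine sum_congr rfl fun i hi => ?_
  · rw [piecewise_eq_of_mem _ _ _ (mem_inter.mp hi).2]
  · rw [piecewise_eq_of_notMem _ _ _ (mem_sdiff.mp hi).2]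

theorem sum_piecewise_add_sum_piecewise [Fintype α] {I T : Finset α} {r : α} (hr : r ∉ I)
    (hrT : r ∈ T) (hT : T.erase r ⊆ I) :
    ∑ i ∈ {r}ᶜ, A i (T.piecewise f g i) + ∑ i ∈ insert r I, A i (T.piecewise g f i) =
      ∑ i ∈ I, A i (f i) + ∑ i, A i (g i) := by
  have hT' : ∀ x ∈ T, x ≠ r → x ∈ I := fun x hx hxr => hT (mem_erase.mpr ⟨hxr, hx⟩)
  have h₁ : {r}ᶜ ∩ T = I ∩ T := by
    ext x; simp only [mem_inter, mem_compl, mem_singleton]; grind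
  have h₂ : {r}ᶜ \ T = Tᶜ := by
    ext x; simp only [mem_sdiff, mem_compl, mem_singleton]; grind
  have h₃ : insert r I ∩ T = T := by
    ext x; simp only [mem_inter, mem_insert]; grind
  have h₄ : insert r I \ T = I \ T := by
    ext x; simp only [mem_sdiff, mem_insert]; grind
  rw [sum_apply_piecewise, sum_apply_piecewise, h₁, h₂, h₃, h₄,
    ← sum_inter_add_sum_sdiff I T, ← sum_add_sum_compl T]
  abel

end Exchange

theorem sum_le_tropPer {m : Type*} [Fintype m] [DecidableEq m] (A : Matrix m m Rmax)
    {f : m → m} (hf : Function.Injective f) : ∑ i, A i (f i) ≤ tropPer A :=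
  Finset.le_sup (f := fun σ : Equiv.Perm m => ∑ i, A i (σ i))
    (mem_univ (Equiv.ofBijective f hf.bijective_of_finite))

theorem sum_compl_singleton_le_tropAdj {n : ℕ} (A : Matrix (Fin (n+1)) (Fin (n+1)) Rmax)
    {r c : Fin (n+1)} {β : Fin (n+1) → Fin (n+1)} (hmaps : Set.MapsTo β {r}ᶜ {c}ᶜ)
    (hinj : Set.InjOn β {r}ᶜ) : ∑ i ∈ {r}ᶜ, A i (β i) ≤ tropAdj A c r := by
  choose δ hδ using fun i : Fin n => Fin.exists_succAbove_eq (hmaps (Fin.succAbove_ne r i))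
  have hδinj : Function.Injective δ := fun i j hij =>
    Fin.succAbove_right_injective <| hinj (Fin.succAbove_ne r i) (Fin.succAbove_ne r j) <| by
      rw [← hδ, ← hδ, hij]
  calc ∑ i ∈ {r}ᶜ, A i (β i)
      = ∑ i, A.submatrix r.succAbove c.succAbove i (δ i) := by
        rw [← Fin.image_succAbove_univ, sum_image fun i _ j _ h =>
          Fin.succAbove_right_injective h]
        simp only [Matrix.submatrix_apply, hδ]
    _ ≤ tropAdj A c r := sum_le_tropPer _ hδinj

theorem exists_perm_sum_add_card_compl_nsmul_le {n : ℕ}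
    (A : Matrix (Fin (n+1)) (Fin (n+1)) Rmax) (I : Finset (Fin (n+1)))
    (f : Fin (n+1) → Fin (n+1)) (hf : Set.InjOn f I) :
    ∃ τ : Equiv.Perm (Fin (n+1)), (I.image f)ᶜ.image τ = Iᶜ ∧
      ∑ i ∈ I, A i (f i) + #Iᶜ • tropPer A ≤
        tropPer A + ∑ j ∈ (I.image f)ᶜ, tropAdj A j (τ j) := by
  generalize hm : #Iᶜ = m
  induction m generalizing I f with
  | zero =>
    obtain rfl : I = univ := by simpa using hm
    have himg : univ.image f = univ :=
      eq_univ_of_card _ (by rw [card_image_of_injOn hf, card_univ])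
    refine ⟨1, by simp [himg], ?_⟩
    simpa [himg] using sum_le_tropPer A (Set.injOn_univ.mp (by simpa using hf))
  | succ m ih =>
    obtain ⟨π, -, hπ⟩ : ∃ π : Equiv.Perm (Fin (n+1)), π ∈ univ ∧ tropPer A = ∑ i, A i (π i) :=
      Finset.exists_mem_eq_sup univ univ_nonempty _
    obtain ⟨c, hc⟩ : ((I.image f)ᶜ).Nonempty := by
      rw [← card_pos, card_compl, card_image_of_injOn hf, ← card_compl, hm]
      exact m.succ_pos
    rw [mem_compl] at hc
    obtain ⟨r, T, hP⟩ := exists_alternatingPath π f I c hf hc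
    obtain ⟨τ', himg', hle'⟩ :=
      ih (insert r I) (T.piecewise π f) (hP.injOn_piecewise_insert hf hc) <| by
        rw [compl_insert, card_erase_of_mem (mem_compl.mpr hP.not_mem), hm, m.add_sub_cancel]
    rw [hP.image_piecewise_insert hf hc] at himg' hle'
    obtain ⟨τ, hτc, hτ, himg⟩ := τ'.exists_image_insert_eq himg'
      (fun h => mem_compl.mp h (mem_insert_self c _))
      (fun h => mem_compl.mp h (mem_insert_self r _))
    rw [insert_compl_insert hc, insert_compl_insert hP.not_mem] at himg
    refine ⟨τ, himg, ?_⟩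
    have hsplit : ∑ j ∈ (I.image f)ᶜ, tropAdj A j (τ j) =
        tropAdj A c r + ∑ j ∈ (insert c (I.image f))ᶜ, tropAdj A j (τ' j) := by
      rw [← insert_compl_insert hc, sum_insert (by simp), hτc,
        sum_congr rfl fun j hj => by rw [hτ j hj]]
    calc ∑ i ∈ I, A i (f i) + (m + 1) • tropPer A
        = ∑ i ∈ {r}ᶜ, A i (T.piecewise f π i) +
            (∑ i ∈ insert r I, A i (T.piecewise π f i) + m • tropPer A) := by
          rw [← add_assoc, sum_piecewise_add_sum_piecewise A f π hP.not_mem hP.mem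
            hP.erase_subset, succ_nsmul, ← hπ]
          abel
      _ ≤ tropAdj A c r + (tropPer A + ∑ j ∈ (insert c (I.image f))ᶜ, tropAdj A j (τ' j)) :=
          add_le_add (sum_compl_singleton_le_tropAdj A (hP.mapsTo_piecewise hc)
            (hP.injOn_piecewise hf)) hle'
      _ = tropPer A + ∑ j ∈ (I.image f)ᶜ, tropAdj A j (τ j) := by
          rw [hsplit]; abel

theorem sum_le_compound_of_image_eq {n k : ℕ} (M : Matrix (Fin n) (Fin n) Rmax) {I J : KSub n k}
    (τ : Equiv.Perm (Fin n)) (h : I.1.image τ = J.1) :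
    ∑ i ∈ I.1, M i (τ i) ≤ compound k M I J := by
  rw [← sum_coe_sort I.1]
  exact Finset.le_sup (f := fun e : {x // x ∈ I.1} ≃ {x // x ∈ J.1} =>
    ∑ i : {x // x ∈ I.1}, M i (e i))
    (mem_univ (τ.subtypeEquiv fun i => by rw [← h, τ.injective.mem_finset_image]))

theorem tropQInv_eq {n : ℕ} {A : Matrix (Fin (n+1)) (Fin (n+1)) Rmax} {p : ℝ}
    (hp : (p : Rmax) = tropPer A) (i j : Fin (n+1)) :
    tropQInv A i j = tropAdj A i j + ((-p : ℝ) : Rmax) := by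
  simp [tropQInv, ← hp]

theorem le_coe_add_add_nsmul_coe_neg {x y : Rmax} {p : ℝ} {m : ℕ}
    (h : x + m • (p : Rmax) ≤ p + y) : x ≤ p + (y + m • ((-p : ℝ) : Rmax)) :=
  calc x = x + m • (p : Rmax) + m • ((-p : ℝ) : Rmax) := by
        rw [add_assoc, ← nsmul_add, ← WithBot.coe_add, add_neg_cancel, WithBot.coe_zero,
          nsmul_zero, add_zero]
    _ ≤ p + y + m • ((-p : ℝ) : Rmax) := by gcongr
    _ = p + (y + m • ((-p : ℝ) : Rmax)) := add_assoc _ _ _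

end TropicalJacobi

open Finset TropicalJacobi in
/-- Tropical Jacobi inequality: for `A` nonsingular,
`per(A) + (A^∇)^{∧(n−k)}_{Jᶜ,Iᶜ} ≥ A^{∧k}_{I,J}`. -/
theorem tropical_jacobi_ineq {n : ℕ} (A : Matrix (Fin (n+1)) (Fin (n+1)) Rmax)
    (hA : ⊥ < tropPer A)
    (k : ℕ)
    (I J : KSub (n+1) k) :
    compound k A I J ≤
      tropPer A +
        compound (n + 1 - k) (tropQInv A)
          ⟨J.1ᶜ, by simp [Finset.card_compl, J.2]⟩
          ⟨I.1ᶜ, by simp [Finset.card_compl, I.2]⟩ := by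
  obtain ⟨p, hp⟩ := WithBot.ne_bot_iff_exists.mp hA.ne'
  refine Finset.sup_le fun σ _ => ?_
  obtain ⟨τ, hτ, hle⟩ := exists_perm_sum_add_card_compl_nsmul_le A I.1 σ.extendSubtype
    σ.extendSubtype.injective.injOn
  rw [σ.image_extendSubtype] at hτ hle
  have hcard : #I.1ᶜ = #J.1ᶜ := by rw [card_compl, card_compl, I.2, J.2]
  calc ∑ i : {x // x ∈ I.1}, A i (σ i)
      = ∑ i ∈ I.1, A i (σ.extendSubtype i) := by
        rw [← sum_coe_sort I.1]
        exact sum_congr rfl fun i _ => by rw [σ.extendSubtype_apply_of_mem _ i.2]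
    _ ≤ tropPer A + ∑ j ∈ J.1ᶜ, tropQInv A j (τ j) := by
        rw [← hp, sum_congr rfl fun j _ => tropQInv_eq hp j (τ j), sum_add_distrib, sum_const,
          ← hcard]
        exact le_coe_add_add_nsmul_coe_neg (hp ▸ hle)
    _ ≤ _ := by gcongr; exact sum_le_compound_of_image_eq (I := ⟨_, _⟩) (J := ⟨_, _⟩) _ τ hτ
end
end

section
/- Over the max-plus semiring, if E is a nonsingular n×n matrix over ℝ_max (per(E) > −∞) and A is any n×n matrix over ℝ_max, then for every k with 1 ≤ k ≤ n, tr((E^∇ ⊙ A ⊙ E)^{∧k}) ≥ tr(A^{∧k}), where tr denotes the tropical trace. -/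
open Matrix

noncomputable section

/-!
Let `π` be a permutation attaining `per(E) = ∑ e_r`, where `e_r = E r (π r)` is finite.
Deleting row `s` and column `π s` leaves `π` as a permutation of weight `per(E) − e_s`, so
`E^∇ (π s) s ≥ −e_s`, and hence `(E^∇ ⊙ A ⊙ E) (π s) (π t) ≥ A s t + e_t − e_s`.
For a bijection `σ` of a `k`-subset `I`, the potential differences `e_{σ i} − e_i` sum to `0`,
so the diagonal entry of `A^{∧k}` at `I` is bounded by that of `(E^∇ ⊙ A ⊙ E)^{∧k}` at `π(I)`.
-/

theorem exists_perm_tropPer_eq_sum {m : Type*} [Fintype m] [DecidableEq m]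
    {E : Matrix m m Rmax} (hE : ⊥ < tropPer E) :
    ∃ (π : Equiv.Perm m) (e : m → ℝ), (∀ i, E i (π i) = e i) ∧ tropPer E = ↑(∑ i, e i) := by
  obtain ⟨π, -, hπ⟩ := Finset.exists_mem_eq_sup Finset.univ Finset.univ_nonempty
    fun σ : Equiv.Perm m => ∑ i, E i (σ i)
  rw [tropPer, hπ] at hE ⊢
  have hne : ∀ i, E i (π i) ≠ ⊥ := fun i =>
    (WithBot.bot_lt_sum_iff.mp hE i (Finset.mem_univ i)).ne'
  choose e he using fun i => WithBot.ne_bot_iff_exists.mp (hne i)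
  exact ⟨π, e, fun i => (he i).symm, by rw [WithBot.coe_sum]; simp only [he]⟩

def Equiv.Perm.removeAt {n : ℕ} (π : Equiv.Perm (Fin (n+1))) (s : Fin (n+1)) :
    Equiv.Perm (Fin n) :=
  (finSuccAboveEquiv s).trans
    ((π.subtypeEquiv (p := (· ≠ s)) (q := (· ≠ π s)) fun _ => π.injective.ne_iff.symm).trans
      (finSuccAboveEquiv (π s)).symm)

theorem Equiv.Perm.succAbove_removeAt {n : ℕ} (π : Equiv.Perm (Fin (n+1))) (s : Fin (n+1))
    (r : Fin n) : (π s).succAbove (π.removeAt s r) = π (s.succAbove r) :=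
  congrArg Subtype.val ((finSuccAboveEquiv (π s)).apply_symm_apply _)

theorem sum_sub_le_tropAdj {n : ℕ} {E : Matrix (Fin (n+1)) (Fin (n+1)) Rmax}
    {π : Equiv.Perm (Fin (n+1))} {e : Fin (n+1) → ℝ} (he : ∀ i, E i (π i) = e i)
    (s : Fin (n+1)) : ((∑ i, e i - e s : ℝ) : Rmax) ≤ tropAdj E (π s) s := by
  have hsum : ∑ r, E.submatrix s.succAbove (π s).succAbove r (π.removeAt s r) =
      ((∑ i, e i - e s : ℝ) : Rmax) := by
    simp only [submatrix_apply, Equiv.Perm.succAbove_removeAt, he, ← WithBot.coe_sum,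
      Fin.sum_univ_succAbove e s, add_sub_cancel_left]
  rw [tropAdj, of_apply, ← hsum]
  exact Finset.le_sup (f := fun ρ : Equiv.Perm (Fin n) =>
    ∑ r, E.submatrix s.succAbove (π s).succAbove r (ρ r)) (Finset.mem_univ _)

theorem neg_le_tropQInv {n : ℕ} {E : Matrix (Fin (n+1)) (Fin (n+1)) Rmax}
    {π : Equiv.Perm (Fin (n+1))} {e : Fin (n+1) → ℝ} (he : ∀ i, E i (π i) = e i)
    (hper : tropPer E = ↑(∑ i, e i)) (s : Fin (n+1)) :
    ((-e s : ℝ) : Rmax) ≤ tropQInv E (π s) s := by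
  rw [tropQInv, of_apply, hper, WithBot.unbotD_coe]
  calc ((-e s : ℝ) : Rmax) = ((∑ i, e i - e s : ℝ) : Rmax) + ((-∑ i, e i : ℝ) : Rmax) := by
        rw [← WithBot.coe_add]; congr 1; ring
    _ ≤ tropAdj E (π s) s + ((-∑ i, e i : ℝ) : Rmax) :=
        add_le_add_left (sum_sub_le_tropAdj he s) _

theorem le_tropMul_tropMul_apply {m : Type*} [Fintype m] {Q A E : Matrix m m Rmax}
    {π : Equiv.Perm m} {e : m → ℝ} (hQ : ∀ s, ((-e s : ℝ) : Rmax) ≤ Q (π s) s)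
    (hE : ∀ t, E t (π t) = e t) (s t : m) :
    A s t + ((e t - e s : ℝ) : Rmax) ≤ tropMul (tropMul Q A) E (π s) (π t) :=
  calc A s t + ((e t - e s : ℝ) : Rmax) = ((-e s : ℝ) : Rmax) + A s t + E t (π t) := by
        rw [hE, sub_eq_neg_add, WithBot.coe_add]; abel
    _ ≤ Q (π s) s + A s t + E t (π t) := by gcongr; exact hQ s
    _ ≤ tropMul Q A (π s) t + E t (π t) := by
        gcongr
        exact Finset.le_sup (f := fun u => Q (π s) u + A u t) (Finset.mem_univ s)
    _ ≤ tropMul (tropMul Q A) E (π s) (π t) :=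
        Finset.le_sup (f := fun u => tropMul Q A (π s) u + E u (π t)) (Finset.mem_univ t)

def KSub.map {n k : ℕ} (π : Equiv.Perm (Fin n)) (I : KSub n k) : KSub n k :=
  ⟨I.1.map π.toEmbedding, by rw [Finset.card_map, I.2]⟩

theorem compound_le_compound_map {n k : ℕ} {A B : Matrix (Fin n) (Fin n) Rmax}
    {π : Equiv.Perm (Fin n)} {e : Fin n → ℝ}
    (h : ∀ s t, A s t + ((e t - e s : ℝ) : Rmax) ≤ B (π s) (π t)) (I : KSub n k) :
    compound k A I I ≤ compound k B (I.map π) (I.map π) := by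
  refine Finset.sup_le fun σ _ => ?_
  let φ : {x // x ∈ I.1} ≃ {x // x ∈ (I.map π).1} :=
    π.subtypeEquiv fun x => by simp [KSub.map]
  have htelescope : ∑ i, (e (σ i) - e i) = 0 := by
    rw [Finset.sum_sub_distrib, Equiv.sum_comp σ fun i => e i.1, sub_self]
  calc ∑ i, A i.1 (σ i).1 = ∑ i, (A i.1 (σ i).1 + ((e (σ i) - e i : ℝ) : Rmax)) := by
        rw [Finset.sum_add_distrib, ← WithBot.coe_sum, htelescope, WithBot.coe_zero, add_zero]
    _ ≤ ∑ i, B (φ i).1 (φ (σ i)).1 := Finset.sum_le_sum fun i _ => h _ _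
    _ = ∑ j, B j.1 ((φ.symm.trans (σ.trans φ)) j).1 := by
        rw [← φ.sum_comp]; simp
    _ ≤ compound k B (I.map π) (I.map π) :=
        Finset.le_sup (f := fun τ : {x // x ∈ (I.map π).1} ≃ {x // x ∈ (I.map π).1} =>
          ∑ j, B j.1 (τ j).1) (Finset.mem_univ _)

theorem tropTrace_compound_le_of_le_conj {n k : ℕ} {A B : Matrix (Fin n) (Fin n) Rmax}
    {π : Equiv.Perm (Fin n)} {e : Fin n → ℝ}
    (h : ∀ s t, A s t + ((e t - e s : ℝ) : Rmax) ≤ B (π s) (π t)) :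
    tropTrace (compound k A) ≤ tropTrace (compound k B) :=
  Finset.sup_le fun I _ => (compound_le_compound_map h I).trans
    (Finset.le_sup (f := fun J => compound k B J J) (Finset.mem_univ _))

theorem trace_compound_conjugate_general {n : ℕ} (E A : Matrix (Fin (n+1)) (Fin (n+1)) Rmax)
    (hE : ⊥ < tropPer E)
    (k : ℕ) :
    tropTrace (compound k A) ≤
      tropTrace (compound k (tropMul (tropMul (tropQInv E) A) E)) := by
  obtain ⟨π, e, he, hper⟩ := exists_perm_tropPer_eq_sum hE
  exact tropTrace_compound_le_of_le_conj
    (le_tropMul_tropMul_apply (neg_le_tropQInv he hper) he)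

/-- for `E` nonsingular and any `A`,
`tr((E^∇ ⊙ A ⊙ E)^{∧k}) ≥ tr(A^{∧k})`. -/
theorem trace_compound_conjugate {n : ℕ} (E A : Matrix (Fin (n+1)) (Fin (n+1)) Rmax)
    (hE : ⊥ < tropPer E)
    (k : ℕ) (hk1 : 1 ≤ k) (hk2 : k ≤ n + 1) :
    tropTrace (compound k A) ≤
      tropTrace (compound k (tropMul (tropMul (tropQInv E) A) E)) :=
  trace_compound_conjugate_general E A hE k
end
end

section
/- Over the max-plus semiring, for every n×n matrix A over ℝ_max, every m ≥ 1, and every k with 1 ≤ k ≤ n, one has tr((A^{⊙m})^{∧k}) ≥ m · tr(A^{∧k}), i.e. the tropical trace of the k-th compound of the m-th tropical power of A dominates the m-th tropical power (classical multiple by m) of the trace of the k-th compound of A. -/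
open Matrix

noncomputable section

/-! For a `k`-subset `I` and a bijection `σ : I → I`, the walks `i, σ i, …, σ^m i` (`i ∈ I`)
have weights bounded by the entries `(A^{⊙m}) i (σ^m i)`, and together they use every arc
`i → σ i` exactly `m` times. Hence `σ^m` witnesses `m · w(σ) ≤ (A^{⊙m})^{∧k}_{I,I}`, and since
multiplication by `m ≥ 1` commutes with `max` in `ℝ_max`, taking maxima gives the theorem. -/

lemma nsmul_finset_sup_le {ι : Type*} {s : Finset ι} {f : ι → Rmax} {b : Rmax} {m : ℕ}
    (hm : m ≠ 0) (h : ∀ i ∈ s, m • f i ≤ b) : m • s.sup f ≤ b := by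
  have hbot : m • (⊥ : Rmax) = ⊥ := by
    obtain ⟨m, rfl⟩ := Nat.exists_eq_succ_of_ne_zero hm
    rw [succ_nsmul, WithBot.add_bot]
  rw [Finset.apply_sup_eq_sup_comp_of_linearOrder (m • ·)
    (fun _ _ hxy => nsmul_le_nsmul_right hxy m) hbot]
  exact Finset.sup_le h

lemma nsmul_tropTrace_le {ι : Type*} [Fintype ι] {B C : Matrix ι ι Rmax} {m : ℕ} (hm : m ≠ 0)
    (h : ∀ i, m • B i i ≤ C i i) : m • tropTrace B ≤ tropTrace C :=
  nsmul_finset_sup_le hm fun i _ =>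
    (h i).trans (Finset.le_sup (f := fun i => C i i) (Finset.mem_univ i))

lemma add_le_tropMul {l p q : Type*} [Fintype p] (A : Matrix l p Rmax) (B : Matrix p q Rmax)
    (i : l) (t : p) (j : q) : A i t + B t j ≤ tropMul A B i j :=
  Finset.le_sup (f := fun t => A i t + B t j) (Finset.mem_univ t)

lemma sum_walk_le_tropPow {ι : Type*} [Fintype ι] [DecidableEq ι] (A : Matrix ι ι Rmax)
    (w : ℕ → ι) (m : ℕ) :
    ∑ t ∈ Finset.range m, A (w t) (w (t + 1)) ≤ tropPow A m (w 0) (w m) := by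
  induction m with
  | zero => simp [tropPow, tropId]
  | succ m ih =>
    rw [Finset.sum_range_succ]
    exact (add_le_add_left ih _).trans (add_le_tropMul _ A (w 0) (w m) (w (m + 1)))

lemma nsmul_sum_le_sum_tropPow {α ι : Type*} [Fintype α] [Fintype ι] [DecidableEq ι]
    (A : Matrix ι ι Rmax) (e : α → ι) (σ : Equiv.Perm α) (m : ℕ) :
    m • ∑ a, A (e a) (e (σ a)) ≤ ∑ a, tropPow A m (e a) (e ((σ ^ m) a)) := calc
  m • ∑ a, A (e a) (e (σ a)) = ∑ _t ∈ Finset.range m, ∑ a, A (e a) (e (σ a)) := by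
    rw [Finset.sum_const, Finset.card_range]
  _ = ∑ t ∈ Finset.range m, ∑ a, A (e ((σ ^ t) a)) (e ((σ ^ (t + 1)) a)) := by
    refine Finset.sum_congr rfl fun t _ => ?_
    simp only [pow_succ', Equiv.Perm.mul_apply]
    exact (Equiv.sum_comp (σ ^ t) fun a => A (e a) (e (σ a))).symm
  _ = ∑ a, ∑ t ∈ Finset.range m, A (e ((σ ^ t) a)) (e ((σ ^ (t + 1)) a)) := Finset.sum_comm
  _ ≤ ∑ a, tropPow A m (e a) (e ((σ ^ m) a)) := Finset.sum_le_sum fun a _ => by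
    simpa using sum_walk_le_tropPow A (fun t => e ((σ ^ t) a)) m

lemma nsmul_compound_le_compound_tropPow {n : ℕ} (k : ℕ) (A : Matrix (Fin n) (Fin n) Rmax)
    {m : ℕ} (hm : m ≠ 0) (I : KSub n k) :
    m • compound k A I I ≤ compound k (tropPow A m) I I :=
  nsmul_finset_sup_le hm fun σ _ => (nsmul_sum_le_sum_tropPow A Subtype.val σ m).trans
    (Finset.le_sup (f := fun τ : {x // x ∈ I.1} ≃ {x // x ∈ I.1} =>
      ∑ i, tropPow A m i.1 (τ i).1) (Finset.mem_univ (σ ^ m)))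

theorem trace_compound_pow_ge_general {n : ℕ} (A : Matrix (Fin n) (Fin n) Rmax)
    (m : ℕ) (hm : 1 ≤ m) (k : ℕ) :
    m • tropTrace (compound k A) ≤ tropTrace (compound k (tropPow A m)) :=
  nsmul_tropTrace_le (by omega) (nsmul_compound_le_compound_tropPow k A (by omega))

/-- `tr((A^{⊙m})^{∧k}) ≥ m ⊙ tr(A^{∧k})`. -/
theorem trace_compound_pow_ge {n : ℕ} (A : Matrix (Fin n) (Fin n) Rmax)
    (m : ℕ) (hm : 1 ≤ m) (k : ℕ) (hk1 : 1 ≤ k) (hk2 : k ≤ n) :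
    m • tropTrace (compound k A) ≤ tropTrace (compound k (tropPow A m)) :=
  trace_compound_pow_ge_general A m hm k
end
end

section
/- Sign factorization for restrictions of a permutation: let π be a permutation of {1,…,n} and let I be a subset of {1,…,n} with complement I^c. Define the sign of a bijection σ between two finite totally ordered subsets of integers as (−1)^{N(σ)}, where N(σ) is the number of inversions, i.e. of pairs (i,j) in the source with i < j and σ(i) > σ(j). Then sgn(π) = sgn(π|_I) · sgn(π|_{I^c}) · (−1)^{∑_{i∈I} (i + π(i))}, where π|_I : I → π[I] and π|_{I^c} : I^c → π[I^c] are the restrictions of π. -/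
open Matrix

noncomputable section

/-!
Split the inversions of `π` according to the blocks `I × I`, `I × Iᶜ`, `Iᶜ × I`, `Iᶜ × Iᶜ`;
only the parity of the cross inversions remains to be computed. Modulo 2, whether `π` reverses
a pair `{i, j}` is `[j < i] + [π j < π i]`, whose sum over all `j` is `i + π i`. Summing over
`i ∈ I`, `j ∉ I` is summing over all `j` minus over `j ∈ I`, and the latter double sum vanishes
because the summand is symmetric with zero diagonal.
-/

open Finset Equiv

section
variable {α : Type*} [LinearOrder α]

def invPairs (π : Perm α) (s t : Finset α) : Finset (α × α) :=
  (s ×ˢ t).filter fun p => p.1 < p.2 ∧ π p.2 < π p.1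

theorem card_invPairs_union_left (π : Perm α) {s s' : Finset α} (h : Disjoint s s')
    (t : Finset α) : #(invPairs π (s ∪ s') t) = #(invPairs π s t) + #(invPairs π s' t) := by
  rw [invPairs, union_product, filter_union, card_union_of_disjoint]
  · rfl
  · exact disjoint_filter_filter (disjoint_product.2 (Or.inl h))

theorem card_invPairs_union_right (π : Perm α) (s : Finset α) {t t' : Finset α}
    (h : Disjoint t t') : #(invPairs π s (t ∪ t')) = #(invPairs π s t) + #(invPairs π s t') := by
  rw [invPairs, product_union, filter_union, card_union_of_disjoint]
  · rfl
  · exact disjoint_filter_filter (disjoint_product.2 (Or.inr h))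

theorem natCast_card_invPairs {R : Type*} [AddCommMonoidWithOne R] (π : Perm α)
    (s t : Finset α) :
    (#(invPairs π s t) : R) = ∑ i ∈ s, ∑ j ∈ t, if i < j ∧ π j < π i then 1 else 0 := by
  rw [invPairs, natCast_card_filter, sum_product]

theorem card_invPairs_univ [Fintype α] (π : Perm α) (I : Finset α) :
    #(invPairs π univ univ) = #(invPairs π I I) + #(invPairs π I Iᶜ) + #(invPairs π Iᶜ I) +
      #(invPairs π Iᶜ Iᶜ) := by
  rw [← union_compl I, card_invPairs_union_left π disjoint_compl_right,
    card_invPairs_union_right π _ disjoint_compl_right,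
    card_invPairs_union_right π _ disjoint_compl_right, add_assoc _ (#(invPairs π Iᶜ I))]

-- For `i ≠ j` this is the indicator that `π` reverses the order of `i` and `j`.
def inversionParity (π : Perm α) (i j : α) : ZMod 2 :=
  (if j < i then 1 else 0) + (if π j < π i then 1 else 0)

theorem inversionParity_self (π : Perm α) (i : α) : inversionParity π i i = 0 := by
  simp [inversionParity]

theorem inversionParity_comm (π : Perm α) (i j : α) :
    inversionParity π i j = inversionParity π j i := by
  rcases eq_or_ne i j with rfl | hij
  · rfl
  rcases hij.lt_or_gt with h | h <;> rcases (π.injective.ne hij).lt_or_gt with h' | h' <;>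
    simp [inversionParity, h, h', h.not_gt, h'.not_gt, CharTwo.add_self_eq_zero]

theorem sum_sum_inversionParity_self (π : Perm α) (s : Finset α) :
    ∑ i ∈ s, ∑ j ∈ s, inversionParity π i j = 0 := by
  rw [← sum_product']
  refine sum_involution (fun p _ => p.swap) ?_ ?_ ?_ fun _ _ => rfl
  · rintro ⟨i, j⟩ -
    rw [Prod.swap_prod_mk, inversionParity_comm π j, CharTwo.add_self_eq_zero]
  · rintro ⟨i, j⟩ - hne hswap
    obtain rfl : j = i := congrArg Prod.fst hswap
    exact hne (inversionParity_self π j)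
  · rintro ⟨i, j⟩ hij
    exact mem_product.2 ⟨(mem_product.1 hij).2, (mem_product.1 hij).1⟩

theorem inversionParity_eq_of_ne (π : Perm α) {i j : α} (hij : i ≠ j) :
    inversionParity π i j =
      (if i < j ∧ π j < π i then 1 else 0) + (if j < i ∧ π i < π j then 1 else 0) := by
  rcases hij.lt_or_gt with h | h <;> rcases (π.injective.ne hij).lt_or_gt with h' | h' <;>
    simp [inversionParity, h, h', h.not_gt, h'.not_gt, CharTwo.add_self_eq_zero]

end

section
variable {n : ℕ}

theorem sum_inversionParity (π : Perm (Fin n)) (i : Fin n) :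
    ∑ j, inversionParity π i j = ((i : ℕ) + (π i : ℕ) : ℕ) := by
  have hIio : ∀ a : Fin n, ∑ j, (if j < a then 1 else 0 : ZMod 2) = (a : ℕ) := fun a => by
    rw [← natCast_card_filter, filter_gt_eq_Iio, Fin.card_Iio]
  simp only [inversionParity, sum_add_distrib]
  rw [Equiv.sum_comp π (fun j => if j < π i then (1 : ZMod 2) else 0),
    hIio, hIio, Nat.cast_add]

theorem natCast_card_invPairs_compl_add (π : Perm (Fin n)) (I : Finset (Fin n)) :
    (#(invPairs π I Iᶜ) + #(invPairs π Iᶜ I) : ZMod 2) =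
      ((∑ i ∈ I, ((i : ℕ) + (π i : ℕ)) : ℕ) : ZMod 2) := by
  rw [natCast_card_invPairs, natCast_card_invPairs, sum_comm (s := Iᶜ), ← sum_add_distrib]
  calc _ = ∑ i ∈ I, ∑ j ∈ Iᶜ, inversionParity π i j :=
        sum_congr rfl fun i hi => by
          rw [← sum_add_distrib]
          exact sum_congr rfl fun j hj =>
            (inversionParity_eq_of_ne π (ne_of_mem_of_not_mem hi (mem_compl.1 hj))).symm
    _ = ∑ i ∈ I, (∑ j, inversionParity π i j - ∑ j ∈ I, inversionParity π i j) :=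
        sum_congr rfl fun i _ => eq_sub_of_add_eq' (sum_add_sum_compl I _)
    _ = ∑ i ∈ I, ∑ j, inversionParity π i j := by
        rw [sum_sub_distrib, sum_sum_inversionParity_self, sub_zero]
    _ = _ := by simp only [sum_inversionParity, Nat.cast_sum]

theorem sign_eq_neg_one_pow_card_invPairs (π : Perm (Fin n)) :
    (Perm.sign π : ℤ) = (-1) ^ #(invPairs π univ univ) := by
  rw [π.sign_eq_prod_prod_Ioi, invPairs, ← prod_const, prod_filter, prod_product]
  push_cast
  refine prod_congr rfl fun i _ => ?_
  rw [← filter_lt_eq_Ioi, prod_filter]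
  refine prod_congr rfl fun j _ => ?_
  rcases eq_or_ne i j with rfl | hij
  · simp
  rcases (π.injective.ne hij).lt_or_gt with h | h <;> simp [h, h.not_gt]

end

/-- sign factorization for restrictions of a permutation:
`sgn(π) = sgn(π|_I) · sgn(π|_{Iᶜ}) · (−1)^{∑_{i∈I}(i + π(i))}`, where the sign of
a bijection between finite ordered sets of integers is `(−1)` to the number of
inversions (pairs `i < j` in the source with `π i > π j`). -/
theorem sign_restriction_factorization {n : ℕ} (π : Equiv.Perm (Fin n))
    (I : Finset (Fin n)) :
    ((Equiv.Perm.sign π : ℤˣ) : ℤ) =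
      (-1 : ℤ) ^ ((I ×ˢ I).filter fun p => p.1 < p.2 ∧ π p.2 < π p.1).card *
      (-1 : ℤ) ^ ((Iᶜ ×ˢ Iᶜ).filter fun p => p.1 < p.2 ∧ π p.2 < π p.1).card *
      (-1 : ℤ) ^ (∑ i ∈ I, ((i : ℕ) + (π i : ℕ))) := by
  have hparity : (#(invPairs π univ univ) : ZMod 2) =
      (#(invPairs π I I) + #(invPairs π Iᶜ Iᶜ) + ∑ i ∈ I, ((i : ℕ) + (π i : ℕ)) : ℕ) := by
    rw [card_invPairs_univ π I, Nat.cast_add (#(invPairs π I I) + #(invPairs π Iᶜ Iᶜ)),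
      ← natCast_card_invPairs_compl_add]
    push_cast
    ring
  rw [sign_eq_neg_one_pow_card_invPairs, ← pow_add, ← pow_add]
  refine neg_one_pow_congr ?_
  rw [← ZMod.natCast_eq_zero_iff_even, ← ZMod.natCast_eq_zero_iff_even, hparity]
  rfl
end
end
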